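/- Let G be a finite abelian group, p the smallest prime dividing |G|, and S a regular sequence over G of length |S| ≥ max{|G|/p + p − 2, D(G)}. If Σ(S) ≠ G, then for every nonempty subsequence T of S, |Σ₀(T)| ≥ |T| + 1. -/

import Mathlib

/-- The set of sums over nonempty subsequences (sub-multisets) of the sequence `S`. -/
def seqSums {G : Type*} [AddCommGroup G] (S : Multiset G) : Set G :=
  {x | ∃ T : Multiset G, T ≤ S ∧ T ≠ 0 ∧ T.sum = x}

/-- `seqSums S` together with `0`. -/
def seqSums0 {G : Type*} [AddCommGroup G] (S : Multiset G) : Set G :=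
  seqSums S ∪ {0}

open Classical in
/-- A sequence `S` over `G` is regular if for every proper subgroup `H ⊊ G`,
at most `|H| - 1` terms of `S` (counted with multiplicity) lie in `H`. -/
def IsRegularSeq {G : Type*} [AddCommGroup G] (S : Multiset G) : Prop :=
  ∀ H : AddSubgroup G, H ≠ ⊤ →
    Multiset.card (S.filter (fun g => g ∈ H)) ≤ Nat.card H - 1

/-- The Davenport constant: the smallest `t` such that every sequence over `G` of length
at least `t` contains a nonempty zero-sum subsequence. -/
noncomputable def davenport (G : Type*) [AddCommGroup G] : ℕ :=
  sInf {t : ℕ | ∀ S : Multiset G, t ≤ Multiset.card S →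
    ∃ T : Multiset G, T ≤ S ∧ T ≠ 0 ∧ T.sum = 0}

/-- The set of sums over nonempty subsets of the finite set `S`. -/
def setSums {G : Type*} [AddCommGroup G] (S : Finset G) : Set G :=
  {x | ∃ T : Finset G, T ⊆ S ∧ T.Nonempty ∧ (∑ g ∈ T, g) = x}

/-- `setSums S` together with `0`. -/
def setSums0 {G : Type*} [AddCommGroup G] (S : Finset G) : Set G :=
  setSums S ∪ {0}

open Pointwise

namespace SubseqAux

variable {G : Type*} [AddCommGroup G]

/-- All subsequence sums, including the empty one. -/
def S0 (T : Multiset G) : Set G := {x | ∃ U, U ≤ T ∧ U.sum = x}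

lemma zero_mem_S0 (T : Multiset G) : (0 : G) ∈ S0 T := ⟨0, zero_le, rfl⟩

lemma S0_mono {T T' : Multiset G} (h : T ≤ T') : S0 T ⊆ S0 T' :=
  fun _ ⟨U, hU, hs⟩ => ⟨U, hU.trans h, hs⟩

lemma S0_zero : S0 (0 : Multiset G) = {0} := by
  ext x
  constructor
  · rintro ⟨U, hU, rfl⟩
    rw [Multiset.le_zero] at hU
    simp [hU]
  · rintro rfl
    exact zero_mem_S0 0

lemma le_cons_iff {α : Type*} {a : α} {T U : Multiset α} :
    U ≤ a ::ₘ T ↔ U ≤ T ∨ ∃ V, V ≤ T ∧ U = a ::ₘ V := by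
  classical
  constructor
  · intro h
    by_cases ha : a ∈ U
    · right
      refine ⟨U.erase a, ?_, (Multiset.cons_erase ha).symm⟩
      have h2 := Multiset.erase_le_erase a h
      rwa [Multiset.erase_cons_head] at h2
    · left
      exact (Multiset.le_cons_of_notMem ha).1 h
  · rintro (h | ⟨V, hV, rfl⟩)
    · exact h.trans (Multiset.le_cons_self T a)
    · exact Multiset.cons_le_cons a hV

lemma S0_cons (a : G) (T : Multiset G) : S0 (a ::ₘ T) = S0 T ∪ (a +ᵥ S0 T) := by
  ext x
  constructor
  · rintro ⟨U, hU, rfl⟩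
    rcases le_cons_iff.1 hU with h | ⟨V, hV, rfl⟩
    · exact Or.inl ⟨U, h, rfl⟩
    · exact Or.inr ⟨V.sum, ⟨V, hV, rfl⟩, by simp [Multiset.sum_cons]⟩
  · rintro (⟨U, hU, rfl⟩ | ⟨y, ⟨U, hU, rfl⟩, rfl⟩)
    · exact ⟨U, hU.trans (Multiset.le_cons_self _ _), rfl⟩
    · exact ⟨a ::ₘ U, Multiset.cons_le_cons a hU, by simp [vadd_eq_add]⟩

lemma exists_of_le_map {α β : Type*} {f : α → β} :
    ∀ {T : Multiset α} {U : Multiset β}, U ≤ T.map f → ∃ V, V ≤ T ∧ V.map f = U := by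
  intro T
  induction T using Multiset.induction with
  | empty =>
    intro U h
    rw [Multiset.map_zero, Multiset.le_zero] at h
    exact ⟨0, le_refl _, by simp [h]⟩
  | cons a T ih =>
    intro U h
    rw [Multiset.map_cons] at h
    rcases le_cons_iff.1 h with h | ⟨V, hV, rfl⟩
    · obtain ⟨V, hVT, rfl⟩ := ih h
      exact ⟨V, hVT.trans (Multiset.le_cons_self _ _), rfl⟩
    · obtain ⟨W, hWT, rfl⟩ := ih hV
      exact ⟨a ::ₘ W, Multiset.cons_le_cons a hWT, by simp⟩

lemma S0_map {G' : Type*} [AddCommGroup G'] (φ : G →+ G') (T : Multiset G) :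
    S0 (T.map φ) = φ '' S0 T := by
  ext x
  constructor
  · rintro ⟨U, hU, rfl⟩
    obtain ⟨V, hV, rfl⟩ := exists_of_le_map hU
    exact ⟨V.sum, ⟨V, hV, rfl⟩, map_multiset_sum φ V⟩
  · rintro ⟨y, ⟨V, hV, rfl⟩, rfl⟩
    exact ⟨V.map φ, Multiset.map_le_map hV, (map_multiset_sum φ V).symm⟩

lemma vadd_S0_eq_of_subset [Finite G] {a : G} {A : Set G} (h : a +ᵥ A ⊆ A) : a +ᵥ A = A :=
  Set.eq_of_subset_of_ncard_le h (Set.ncard_vadd_set a A).ge (Set.toFinite _)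
lemma aux_reduce [Finite G] (T : Multiset G) :
    ∃ P, P ≤ T ∧ S0 P = S0 T ∧ Multiset.card P + 1 ≤ (S0 P).ncard := by
  classical
  induction T using Multiset.strongInductionOn with
  | _ T ih =>
    rcases eq_or_ne T 0 with rfl | hT
    · exact ⟨0, le_refl _, rfl, by simp [S0_zero]⟩
    · obtain ⟨t, ht⟩ := Multiset.exists_mem_of_ne_zero hT
      set T' := T.erase t with hT'v
      have hTT' : T = t ::ₘ T' := (Multiset.cons_erase ht).symm
      obtain ⟨P', hP'le, hP'eq, hP'card⟩ := ih T' (by rw [hT'v]; exact Multiset.erase_lt.2 ht)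
      by_cases hS : S0 T = S0 T'
      · exact ⟨P', hP'le.trans (by rw [hT'v]; exact Multiset.erase_le t T),
          by rw [hP'eq, ← hS], hP'card⟩
      · refine ⟨t ::ₘ P', ?_, ?_, ?_⟩
        · rw [hTT']; exact Multiset.cons_le_cons t hP'le
        · rw [S0_cons, hP'eq, ← S0_cons, ← hTT']
        · have hsub : S0 P' ⊆ S0 (t ::ₘ P') := S0_mono (Multiset.le_cons_self _ _)
          have hstrict : S0 P' ⊂ S0 (t ::ₘ P') := by
            refine hsub.ssubset_of_ne fun h => hS ?_
            rw [hTT', S0_cons]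
            have hsub2 : t +ᵥ S0 T' ⊆ S0 T' := by
              rw [← hP'eq]
              intro x hx
              have hx2 : x ∈ S0 (t ::ₘ P') := by rw [S0_cons]; exact Or.inr hx
              rwa [← h] at hx2
            rw [Set.union_eq_self_of_subset_right hsub2]
          have hlt := Set.ncard_lt_ncard hstrict (Set.toFinite _)
          rw [Multiset.card_cons]
          omega

open Classical in
lemma weakW [Finite G] (T : Multiset G) :
    Multiset.card (T.filter (fun t => t ∉ AddAction.stabilizer G (S0 T))) + 1 ≤ (S0 T).ncard := by
  classical
  set A := S0 T with hA
  obtain ⟨P, hPle, hPeq, hPcard⟩ := aux_reduce T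
  rw [← hA] at hPeq
  have hTP : T - P + P = T := tsub_add_cancel_of_le hPle
  have hmem : ∀ t ∈ T - P, t ∈ AddAction.stabilizer G A := by
    intro t ht
    have hle : t ::ₘ P ≤ T := by
      rw [← hTP, ← Multiset.singleton_add]
      exact add_le_add (Multiset.singleton_le.2 ht) (le_refl P)
    have hsub : t +ᵥ S0 P ⊆ S0 P := by
      intro x hx
      have hx2 : x ∈ S0 (t ::ₘ P) := by rw [S0_cons]; exact Or.inr hx
      have hx3 := S0_mono hle hx2
      rw [← hA, ← hPeq] at hx3
      exact hx3
    have hv := vadd_S0_eq_of_subset hsub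
    rw [AddAction.mem_stabilizer_iff, ← hPeq]
    exact hv
  have hfilter0 : (T - P).filter (fun t => t ∉ AddAction.stabilizer G A) = 0 := by
    rw [Multiset.filter_eq_nil]
    exact fun a ha h => h (hmem a ha)
  have hfT : T.filter (fun t => t ∉ AddAction.stabilizer G A)
      = P.filter (fun t => t ∉ AddAction.stabilizer G A) := by
    conv_lhs => rw [← hTP]
    rw [Multiset.filter_add, hfilter0, zero_add]
  rw [hfT]
  have h1 := Multiset.card_le_card
    (Multiset.filter_le (fun t => t ∉ AddAction.stabilizer G A) P)
  have h2 : (S0 P).ncard = A.ncard := by rw [hPeq]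
  omega

open Classical in
lemma strongW [Finite G] (T : Multiset G) :
    Nat.card (AddAction.stabilizer G (S0 T)) +
      Multiset.card (T.filter (fun t => t ∉ AddAction.stabilizer G (S0 T))) ≤ (S0 T).ncard := by
  classical
  set A := S0 T with hA
  set H := AddAction.stabilizer G A with hH
  let φ : G →+ G ⧸ H := QuotientAddGroup.mk' H
  have hBeq : S0 (T.map φ) = φ '' A := by rw [hA]; exact S0_map φ T
  have hHsubA : (H : Set G) ⊆ A := by
    intro h hh
    have hst := AddAction.mem_stabilizer_iff.1 hh
    rw [← hst]
    exact ⟨0, zero_mem_S0 T, by simp⟩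
  -- key: terms outside H stay outside the stabilizer in the quotient
  have hkey : ∀ t : G, t ∉ H → (φ t) ∉ AddAction.stabilizer (G ⧸ H) (S0 (T.map φ)) := by
    intro t htH hstab
    apply htH
    rw [hH, AddAction.mem_stabilizer_iff]
    apply vadd_S0_eq_of_subset
    rintro x ⟨a, ha, rfl⟩
    have h1 : φ (t + a) ∈ (φ t) +ᵥ S0 (T.map φ) := by
      rw [hBeq]
      exact ⟨φ a, ⟨a, ha, rfl⟩, by simp [vadd_eq_add]⟩
    rw [AddAction.mem_stabilizer_iff.1 hstab, hBeq] at h1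
    obtain ⟨a', ha', hphi⟩ := h1
    have hsubmem : a' - (t + a) ∈ H := by
      rw [← QuotientAddGroup.eq_iff_sub_mem]
      exact hphi
    have hneg : -(a' - (t + a)) ∈ AddAction.stabilizer G A := by
      rw [← hH]; exact neg_mem hsubmem
    have hst := AddAction.mem_stabilizer_iff.1 hneg
    have hmem2 : (-(a' - (t + a))) +ᵥ a' ∈ (-(a' - (t + a))) +ᵥ A :=
      Set.vadd_mem_vadd_set ha'
    rw [hst] at hmem2
    have heq2 : t +ᵥ a = (-(a' - (t + a))) +ᵥ a' := by
      rw [vadd_eq_add, vadd_eq_add]; abel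
    show t +ᵥ a ∈ A
    rw [heq2]
    exact hmem2
  -- apply the weak bound in the quotient
  have hW := weakW (T.map φ)
  have hfm : ((T.map φ).filter
      (fun b => b ∉ AddAction.stabilizer (G ⧸ H) (S0 (T.map φ))))
      = (T.filter ((fun b => b ∉ AddAction.stabilizer (G ⧸ H) (S0 (T.map φ))) ∘ φ)).map φ :=
    Multiset.filter_map
      (p := fun b => b ∉ AddAction.stabilizer (G ⧸ H) (S0 (T.map φ))) (⇑φ) T
  have hmono : T.filter (fun t => t ∉ H) ≤
      T.filter ((fun b => b ∉ AddAction.stabilizer (G ⧸ H) (S0 (T.map φ))) ∘ φ) := by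
    apply Multiset.monotone_filter_right
    intro a haH
    exact hkey a haH
  have hk1 : Multiset.card (T.filter (fun t => t ∉ H)) + 1 ≤ (S0 (T.map φ)).ncard := by
    have := Multiset.card_le_card hmono
    rw [hfm, Multiset.card_map] at hW
    omega
  -- counting
  have hB0 : (0 : G ⧸ H) ∈ φ '' A := ⟨0, zero_mem_S0 T, map_zero φ⟩
  have hdiff1 : ((φ '' A) \ {0}).ncard = (φ '' A).ncard - 1 :=
    Set.ncard_diff_singleton_of_mem hB0
  have hsubdiff : (φ '' A) \ {0} ⊆ φ '' (A \ (H : Set G)) := by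
    rintro b ⟨⟨a, ha, rfl⟩, hb0⟩
    refine ⟨a, ⟨ha, fun haH => hb0 ?_⟩, rfl⟩
    have : φ a = 0 := (QuotientAddGroup.eq_zero_iff a).2 haH
    simp [this]
  have hle1 : ((φ '' A) \ {0}).ncard ≤ (A \ (H : Set G)).ncard :=
    le_trans (Set.ncard_le_ncard hsubdiff (Set.toFinite _)) (Set.ncard_image_le (Set.toFinite _))
  have hsum : (A \ (H : Set G)).ncard + (H : Set G).ncard = A.ncard :=
    Set.ncard_diff_add_ncard_of_subset hHsubA (Set.toFinite _)
  have hcardH : Nat.card H = (H : Set G).ncard := by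
    rw [← Nat.card_coe_set_eq]
    rfl
  have hBpos : 1 ≤ (φ '' A).ncard := by
    have : (φ '' A).Nonempty := ⟨0, hB0⟩
    have := Set.ncard_pos (Set.toFinite _) |>.2 this
    omega
  rw [hBeq] at hk1
  show Nat.card H + Multiset.card (T.filter (fun t => t ∉ H)) ≤ A.ncard
  omega

lemma seqSums0_eq (T : Multiset G) : seqSums0 T = S0 T := by
  ext x
  constructor
  · rintro (⟨U, hU, h0, hs⟩ | hx)
    · exact ⟨U, hU, hs⟩
    · rw [Set.mem_singleton_iff] at hx
      rw [hx]
      exact zero_mem_S0 T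
  · rintro ⟨U, hU, rfl⟩
    rcases eq_or_ne U 0 with rfl | h0
    · right; simp
    · left; exact ⟨U, hU, h0, rfl⟩

lemma no_zero_sum_card [Finite G] (T : Multiset G)
    (h : ∀ U : Multiset G, U ≤ T → U ≠ 0 → U.sum ≠ 0) :
    Multiset.card T + 1 ≤ (S0 T).ncard := by
  induction T using Multiset.induction with
  | empty => simp [S0_zero]
  | cons a T ih =>
    have hT : ∀ U : Multiset G, U ≤ T → U ≠ 0 → U.sum ≠ 0 :=
      fun U hU => h U (hU.trans (Multiset.le_cons_self T a))
    have h1 := ih hT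
    have hsub : S0 T ⊆ S0 (a ::ₘ T) := S0_mono (Multiset.le_cons_self T a)
    have hne : S0 (a ::ₘ T) ≠ S0 T := by
      intro heq
      have hsub2 : a +ᵥ S0 T ⊆ S0 T := by
        intro x hx
        have hx2 : x ∈ S0 (a ::ₘ T) := by rw [S0_cons]; exact Or.inr hx
        rwa [heq] at hx2
      have heq2 : a +ᵥ S0 T = S0 T := vadd_S0_eq_of_subset hsub2
      have h0 : (0 : G) ∈ a +ᵥ S0 T := by rw [heq2]; exact zero_mem_S0 T
      obtain ⟨y, hy, hay⟩ := h0
      obtain ⟨U, hU, rfl⟩ := hy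
      refine h (a ::ₘ U) (Multiset.cons_le_cons a hU) (Multiset.cons_ne_zero) ?_
      simpa [Multiset.sum_cons, vadd_eq_add] using hay
    have hstrict : S0 T ⊂ S0 (a ::ₘ T) := hsub.ssubset_of_ne (Ne.symm hne)
    have hlt := Set.ncard_lt_ncard hstrict (Set.toFinite _)
    rw [Multiset.card_cons]
    omega

lemma exists_zero_sum [Finite G] (S : Multiset G) (h : davenport G ≤ Multiset.card S) :
    ∃ T : Multiset G, T ≤ S ∧ T ≠ 0 ∧ T.sum = 0 := by
  have hmem : Nat.card G ∈ {t : ℕ | ∀ S : Multiset G, t ≤ Multiset.card S →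
      ∃ T : Multiset G, T ≤ S ∧ T ≠ 0 ∧ T.sum = 0} := by
    intro S' hS'
    by_contra hno
    push_neg at hno
    have hcard := no_zero_sum_card S' fun U hU h0 => hno U hU h0
    have hle : (S0 S').ncard ≤ Nat.card G := by
      rw [← Set.ncard_univ]
      exact Set.ncard_le_ncard (Set.subset_univ _) (Set.toFinite _)
    omega
  have hd : davenport G ∈ {t : ℕ | ∀ S : Multiset G, t ≤ Multiset.card S →
      ∃ T : Multiset G, T ≤ S ∧ T ≠ 0 ∧ T.sum = 0} :=
    Nat.sInf_mem ⟨Nat.card G, hmem⟩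
  exact hd S h

end SubseqAux


open SubseqAux in
/-- If `S` is a regular sequence over a finite abelian group `G` of length
at least `max (|G|/p + p - 2) (D G)` with `Σ(S) ≠ G`, then every nonempty subsequence `T`
of `S` satisfies `|Σ₀(T)| ≥ |T| + 1`. -/
theorem subseq_sums_lower_bound (G : Type*) [AddCommGroup G] [Finite G]
    (h1 : 1 < Nat.card G) (p : ℕ) (hp : p = (Nat.card G).minFac)
    (S : Multiset G) (hreg : IsRegularSeq S)
    (hlen : max (Nat.card G / p + p - 2) (davenport G) ≤ Multiset.card S)
    (hne : seqSums S ≠ Set.univ) :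
    ∀ T : Multiset G, T ≤ S → T ≠ 0 →
      Multiset.card T + 1 ≤ Nat.card (seqSums0 T) := by
  classical
  intro T hTS hT0
  by_contra hcon
  push_neg at hcon
  have hA : seqSums0 T = S0 T := seqSums0_eq T
  rw [hA, Nat.card_coe_set_eq] at hcon
  have hcard : (S0 T).ncard ≤ Multiset.card T := by omega
  by_cases hHtop : AddAction.stabilizer G (S0 T) = (⊤ : AddSubgroup G)
  · -- the stabilizer is everything: sums cover the whole group
    have huniv : S0 T = Set.univ := by
      ext x
      simp only [Set.mem_univ, iff_true]
      have hx : x ∈ AddAction.stabilizer G (S0 T) := by rw [hHtop]; trivial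
      have hst := AddAction.mem_stabilizer_iff.1 hx
      rw [← hst]
      exact ⟨0, zero_mem_S0 T, by simp⟩
    apply hne
    ext g
    simp only [Set.mem_univ, iff_true]
    rcases eq_or_ne g 0 with rfl | hg
    · exact exists_zero_sum S (le_trans (le_max_right _ _) hlen)
    · have hgmem : g ∈ S0 T := by rw [huniv]; trivial
      obtain ⟨U, hU, hUs⟩ := hgmem
      have hU0 : U ≠ 0 := by
        rintro rfl
        exact hg hUs.symm
      exact ⟨U, hU.trans hTS, hU0, hUs⟩
  · -- proper stabilizer: contradict regularity
    have hstrong := strongW T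
    have hreg' := hreg _ hHtop
    have hTfilter : Multiset.card (T.filter (fun g => g ∈ AddAction.stabilizer G (S0 T)))
        ≤ Multiset.card (S.filter (fun g => g ∈ AddAction.stabilizer G (S0 T))) :=
      Multiset.card_le_card (Multiset.filter_le_filter _ hTS)
    have hsplit : Multiset.card (T.filter (fun g => g ∈ AddAction.stabilizer G (S0 T)))
        + Multiset.card (T.filter (fun t => t ∉ AddAction.stabilizer G (S0 T)))
        = Multiset.card T := by
      rw [← Multiset.card_add, Multiset.filter_add_not]
    have hHpos : 1 ≤ Nat.card (AddAction.stabilizer G (S0 T)) := Nat.card_pos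
    have hreg'' : Multiset.card (S.filter (fun g => g ∈ AddAction.stabilizer G (S0 T)))
        ≤ Nat.card (AddAction.stabilizer G (S0 T)) - 1 := by convert hreg'
    omega
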